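/- Let I ⊆ ℝ be an open interval and A : I → gl(ℝ⁶) a differentiable curve with A(t) ∈ 𝔰𝔭(ℝ⁶) for all t, solving the bracket flow A′(t) = −(½ tr(S_{A(t)}²) + ¼ (tr(J A(t)))²)·A(t) + ½[A(t), [A(t), A(t)ᵗ]] + ½[A(t), S_{A(t)} ∘₆ S_{A(t)}]. Then for all t ∈ I: d/dt |A(t)|² = −( |S_{A(t)}|² + ½(tr J A(t))² )·|A(t)|² − |[A(t), A(t)ᵗ]|² − ⟨ S_{A(t)} ∘₆ S_{A(t)}, [A(t), A(t)ᵗ] ⟩. -/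

import Mathlib

/-!
Since `d/dt |A|² = 2⟨A', A⟩`, the claim is the pointwise identity for `2⟨F(A), A⟩`, `F` the flow
field. The scalar term contributes a multiple of `|A|²`, with `tr(S_A²) = |S_A|²` as `S_A` is
symmetric, and each bracket term satisfies `⟨[A, C], A⟩ = −⟨C, [A, Aᵀ]⟩`, since `ad_A` and `ad_{Aᵀ}`
are adjoint for the trace form.
-/

open Matrix BigOperators

noncomputable section

abbrev M6 : Type := Matrix (Fin 6) (Fin 6) ℝ
abbrev M7 : Type := Matrix (Fin 7) (Fin 7) ℝ

/-- The canonical almost complex structure `J` on `ℝ⁶`: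
`Je₁ = e₂, Je₂ = −e₁, Je₃ = e₄, Je₄ = −e₃, Je₅ = e₆, Je₆ = −e₅` (0-based indices). -/
def J6 : M6 := Matrix.of fun i j =>
  if (i = 1 ∧ j = 0) ∨ (i = 3 ∧ j = 2) ∨ (i = 5 ∧ j = 4) then 1
  else if (i = 0 ∧ j = 1) ∨ (i = 2 ∧ j = 3) ∨ (i = 4 ∧ j = 5) then -1
  else 0

/-- `A ∈ 𝔰𝔭(ℝ⁶)` iff `AJ + JAᵗ = 0`. -/
def inSp (A : M6) : Prop := A * J6 + J6 * Aᵀ = 0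

/-- The symmetric part `S_A = ½(A + Aᵗ)`. -/
def symPart (A : M6) : M6 := (1/2 : ℝ) • (A + Aᵀ)

/-- Frobenius inner product `⟨X,Y⟩ = tr(XYᵗ)`. -/
def mdot {n : ℕ} (X Y : Matrix (Fin n) (Fin n) ℝ) : ℝ := (X * Yᵀ).trace

/-- Commutator `[X,Y] = XY − YX`. -/
def mcomm {n : ℕ} (X Y : Matrix (Fin n) (Fin n) ℝ) : Matrix (Fin n) (Fin n) ℝ := X * Y - Y * X

/-- Kronecker delta. -/
def kdelta {n : ℕ} (x y : Fin n) : ℝ := if x = y then 1 else 0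

/-- The totally antisymmetric 3-tensor `e^a ∧ e^b ∧ e^c` evaluated on `(e_i, e_j, e_k)`. -/
def alt3 {n : ℕ} (a b c i j k : Fin n) : ℝ :=
  Matrix.det !![kdelta a i, kdelta a j, kdelta a k;
                kdelta b i, kdelta b j, kdelta b k;
                kdelta c i, kdelta c j, kdelta c k]

/-- `ρ⁺ = e¹³⁵ − e¹⁴⁶ − e²⁴⁵ − e²³⁶` (here written with 0-based indices). -/
def rhoP (i j k : Fin 6) : ℝ :=
  alt3 0 2 4 i j k - alt3 0 3 5 i j k - alt3 1 3 4 i j k - alt3 1 2 5 i j k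

/-- `(h ∘₆ k)_{ab} = Σ_{m,n,p,q} h_{mn} k_{pq} ρ⁺_{mpa} ρ⁺_{nqb}`. -/
def circ6 (h k : M6) : M6 :=
  Matrix.of fun a b => ∑ m, ∑ n, ∑ p, ∑ q, h m n * k p q * rhoP m p a * rhoP n q b

/-- The bracket-flow vector field of the Laplacian coflow. -/
def Fflow (A : M6) : M6 :=
  (-((1/2 : ℝ) * (symPart A * symPart A).trace + (1/4 : ℝ) * ((J6 * A).trace)^2)) • A
  + (1/2 : ℝ) • mcomm A (mcomm A Aᵀ)
  + (1/2 : ℝ) • mcomm A (circ6 (symPart A) (symPart A))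

section Frobenius

variable {n : ℕ}

lemma mdot_eq_sum (X Y : Matrix (Fin n) (Fin n) ℝ) : mdot X Y = ∑ i, ∑ j, X i j * Y i j := by
  simp only [mdot, ← sum_hadamard_eq, hadamard_apply]

lemma mdot_add_left (X Y Z : Matrix (Fin n) (Fin n) ℝ) :
    mdot (X + Y) Z = mdot X Z + mdot Y Z := by
  simp only [mdot, Matrix.add_mul, trace_add]

lemma mdot_smul_left (c : ℝ) (X Y : Matrix (Fin n) (Fin n) ℝ) : mdot (c • X) Y = c * mdot X Y := by
  simp only [mdot, Matrix.smul_mul, trace_smul, smul_eq_mul]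

lemma mdot_self_of_isSymm {S : Matrix (Fin n) (Fin n) ℝ} (hS : S.IsSymm) :
    mdot S S = (S * S).trace := by
  rw [mdot, hS.eq]

lemma mdot_mcomm_left_self (A C : Matrix (Fin n) (Fin n) ℝ) :
    mdot (mcomm A C) A = -mdot C (mcomm A Aᵀ) := by
  simp only [mdot, mcomm, Matrix.sub_mul, Matrix.mul_sub, transpose_sub, transpose_mul,
    transpose_transpose, trace_sub]
  rw [trace_mul_cycle A C Aᵀ, trace_mul_comm (Aᵀ * A) C, Matrix.mul_assoc C A Aᵀ]
  ring

lemma hasDerivAt_mdot_self {A : ℝ → Matrix (Fin n) (Fin n) ℝ} {A' : Matrix (Fin n) (Fin n) ℝ}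
    {t : ℝ} (hA : ∀ i j, HasDerivAt (fun s => A s i j) (A' i j) t) :
    HasDerivAt (fun s => mdot (A s) (A s)) (2 * mdot A' (A t)) t := by
  simp only [mdot_eq_sum, Finset.mul_sum]
  refine HasDerivAt.fun_sum fun i _ => HasDerivAt.fun_sum fun j _ => ?_
  exact ((hA i j).fun_mul (hA i j)).congr_deriv (by ring)

end Frobenius

lemma symPart_isSymm (A : M6) : (symPart A).IsSymm := by
  simp only [IsSymm, symPart, transpose_smul, transpose_add, transpose_transpose, add_comm]

lemma two_mul_mdot_Fflow_self (A : M6) :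
    2 * mdot (Fflow A) A =
      -(mdot (symPart A) (symPart A) + (1/2) * ((J6 * A).trace)^2) * mdot A A
        - mdot (mcomm A Aᵀ) (mcomm A Aᵀ)
        - mdot (circ6 (symPart A) (symPart A)) (mcomm A Aᵀ) := by
  rw [Fflow, mdot_add_left, mdot_add_left, mdot_smul_left, mdot_smul_left, mdot_smul_left,
    mdot_mcomm_left_self, mdot_mcomm_left_self, mdot_self_of_isSymm (symPart_isSymm A)]
  ring

theorem norm_evolution (a b : ℝ) (A : ℝ → M6)
    (hflow : ∀ t ∈ Set.Ioo a b, ∀ i j, HasDerivAt (fun s => A s i j) (Fflow (A t) i j) t) :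
    ∀ t ∈ Set.Ioo a b,
      HasDerivAt (fun s => mdot (A s) (A s))
        (-(mdot (symPart (A t)) (symPart (A t)) + (1/2) * ((J6 * A t).trace)^2)
            * mdot (A t) (A t)
          - mdot (mcomm (A t) (A t)ᵀ) (mcomm (A t) (A t)ᵀ)
          - mdot (circ6 (symPart (A t)) (symPart (A t))) (mcomm (A t) (A t)ᵀ)) t := by
  intro t ht
  rw [← two_mul_mdot_Fflow_self]
  exact hasDerivAt_mdot_self (hflow t ht)
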